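/- arXiv:1802.08635 — 11 statements merged into one kernel-verified Lean document; each statement's English description precedes it below -/
import Mathlib

section
/- Let n be a positive integer, w, d ∈ ℝⁿ with dᵢ ≥ 0 for all i, and α > 0. Define b* ∈ {−1,0,1}ⁿ by b*ᵢ = 1 if wᵢ > α/2, b*ᵢ = −1 if wᵢ < −α/2, and b*ᵢ = 0 otherwise (i.e., b* = I_{α/2}(w)). Then for every b ∈ {−1,0,1}ⁿ, Σᵢ dᵢ(α b*ᵢ − wᵢ)² ≤ Σᵢ dᵢ(α bᵢ − wᵢ)². (Proposition 2, b-step: for fixed scaling α, thresholding at α/2 minimizes the weighted ternarization objective.) -/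
/-- Proposition 2, b-step: for fixed scaling `α > 0`, the thresholding vector
`bstar = I_{α/2}(w)` minimizes the weighted ternarization objective
`∑ i, d i * (α * b i - w i)^2` over all ternary vectors `b ∈ {−1,0,1}ⁿ`. -/
theorem stmt_1 (n : ℕ) (hn : 0 < n) (w d : Fin n → ℝ) (hd : ∀ i, 0 ≤ d i)
    (α : ℝ) (hα : 0 < α) (bstar : Fin n → ℝ)
    (hbstar : ∀ i, bstar i =
      if w i > α / 2 then 1 else if w i < -(α / 2) then -1 else 0) :
    ∀ b : Fin n → ℝ, (∀ i, b i ∈ ({-1, 0, 1} : Set ℝ)) →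
      ∑ i, d i * (α * bstar i - w i)^2 ≤ ∑ i, d i * (α * b i - w i)^2 := by
  intro b hb
  apply Finset.sum_le_sum
  intro i _
  have hbi := hb i
  simp only [Set.mem_insert_iff, Set.mem_singleton_iff] at hbi
  have h := hbstar i
  have hdi := hd i
  apply mul_le_mul_of_nonneg_left _ hdi
  rcases hbi with h1 | h1 | h1 <;> rw [h1] <;>
    split_ifs at h with h2 h3 <;> rw [h] <;> nlinarith [sq_nonneg (w i)]
end

section
/- Let n be a positive integer, w, d ∈ ℝⁿ with dᵢ > 0 for all i, and let b ∈ {−1,0,1}ⁿ be sign-consistent with w (i.e., bᵢ·wᵢ ≥ 0 for all i) and not identically zero. Define α* = (Σᵢ dᵢ|bᵢ||wᵢ|) / (Σᵢ dᵢ|bᵢ|) = ‖b ⊙ d ⊙ w‖₁ / ‖b ⊙ d‖₁. Then for every α ∈ ℝ, Σᵢ dᵢ(α* bᵢ − wᵢ)² ≤ Σᵢ dᵢ(α bᵢ − wᵢ)². (Proposition 2, α-step: for a fixed sign-consistent ternary b, the optimal scaling is the d-weighted mean of |wᵢ| over the support of b.) -/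
/-- Proposition 2, α-step: for a fixed sign-consistent, not identically zero
ternary vector `b`, the scaling `αstar = ‖b ⊙ d ⊙ w‖₁ / ‖b ⊙ d‖₁`, i.e. the
`d`-weighted mean of `|w i|` over the support of `b`, minimizes
`α ↦ ∑ i, d i * (α * b i - w i)^2` over all `α ∈ ℝ`. -/
theorem stmt_2 (n : ℕ) (hn : 0 < n) (w d : Fin n → ℝ) (hd : ∀ i, 0 < d i)
    (b : Fin n → ℝ) (hb : ∀ i, b i ∈ ({-1, 0, 1} : Set ℝ))
    (hsign : ∀ i, b i * w i ≥ 0) (hnz : ∃ i, b i ≠ 0)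
    (αstar : ℝ)
    (hαstar : αstar = (∑ i, d i * |b i| * |w i|) / (∑ i, d i * |b i|)) :
    ∀ α : ℝ, ∑ i, d i * (αstar * b i - w i)^2 ≤ ∑ i, d i * (α * b i - w i)^2 := by
  intro α
  set S := ∑ i, d i * (b i) ^ 2 with hSdef
  set T := ∑ i, d i * b i * w i with hTdef
  have hS : 0 < S := by
    obtain ⟨j, hj⟩ := hnz
    apply Finset.sum_pos' (fun i _ => mul_nonneg (hd i).le (sq_nonneg _))
    refine ⟨j, Finset.mem_univ j, mul_pos (hd j) ?_⟩
    rcases hb j with h | h | h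
    · rw [h]; norm_num
    · exact absurd h hj
    · rw [h]; norm_num
  have hSb : S = ∑ i, d i * |b i| := by
    apply Finset.sum_congr rfl
    intro i _
    rcases hb i with h | h | h <;> rw [h] <;> norm_num
  have hT : T = ∑ i, d i * |b i| * |w i| := by
    apply Finset.sum_congr rfl
    intro i _
    have h1 : b i * w i = |b i * w i| := (abs_of_nonneg (hsign i)).symm
    rw [mul_assoc, h1, abs_mul, mul_assoc]
  have hα : αstar * S = T := by
    rw [hαstar, hSb, hT, div_mul_cancel₀]
    rw [← hSb]
    exact hS.ne'
  have expand : ∀ β : ℝ, ∑ i, d i * (β * b i - w i) ^ 2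
      = β ^ 2 * S - 2 * β * T + ∑ i, d i * (w i) ^ 2 := by
    intro β
    rw [hSdef, hTdef, Finset.mul_sum, Finset.mul_sum, ← Finset.sum_sub_distrib,
      ← Finset.sum_add_distrib]
    apply Finset.sum_congr rfl
    intro i _
    ring
  have h1 : αstar * T = αstar ^ 2 * S := by rw [← hα]; ring
  have h2 : α * T = α * αstar * S := by rw [← hα]; ring
  rw [expand α, expand αstar]
  nlinarith [mul_nonneg hS.le (sq_nonneg (α - αstar)), h1, h2]
end

section
/- Let n be a positive integer and w, d ∈ ℝⁿ with dᵢ > 0 for all i. Suppose α* > 0 and b* ∈ {−1,0,1}ⁿ jointly minimize f(α,b) = (1/2)·Σᵢ dᵢ(α bᵢ − wᵢ)² over all α > 0 and b ∈ {−1,0,1}ⁿ, that b* is not identically zero, and that |wᵢ| ≠ α*/2 for all i. Then b* = I_{α*/2}(w) (i.e., b*ᵢ = 1 if wᵢ > α*/2, −1 if wᵢ < −α*/2, 0 otherwise) and α* = (Σᵢ dᵢ|b*ᵢ||wᵢ|) / (Σᵢ dᵢ|b*ᵢ|). (Proposition 2, joint form: any nondegenerate global optimum of the loss-aware ternarization step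 satisfies the alternating optimality conditions.) -/
set_option maxHeartbeats 1600000


/-- Proposition 2, joint form: any nondegenerate global optimum `(αstar, bstar)` of
the loss-aware ternarization step `f(α,b) = (1/2)·∑ i, d i (α b i − w i)²`
over `α > 0` and `b ∈ {−1,0,1}ⁿ` satisfies the alternating optimality conditions:
`bstar = I_{αstar/2}(w)` and `αstar` is the `d`-weighted mean of `|w i|` over the
support of `bstar`. -/
theorem stmt_3 (n : ℕ) (hn : 0 < n) (w d : Fin n → ℝ) (hd : ∀ i, 0 < d i)
    (αstar : ℝ) (hαpos : 0 < αstar)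
    (bstar : Fin n → ℝ) (hbstar : ∀ i, bstar i ∈ ({-1, 0, 1} : Set ℝ))
    (hmin : ∀ α : ℝ, 0 < α → ∀ b : Fin n → ℝ, (∀ i, b i ∈ ({-1, 0, 1} : Set ℝ)) →
      (1/2) * ∑ i, d i * (αstar * bstar i - w i)^2
        ≤ (1/2) * ∑ i, d i * (α * b i - w i)^2)
    (hnz : ∃ i, bstar i ≠ 0)
    (hne : ∀ i, |w i| ≠ αstar / 2) :
    (∀ i, bstar i =
      if w i > αstar / 2 then 1 else if w i < -(αstar / 2) then -1 else 0) ∧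
    αstar = (∑ i, d i * |bstar i| * |w i|) / (∑ i, d i * |bstar i|) := by
  -- pointwise optimality
  have point : ∀ i : Fin n, ∀ t : ℝ, t ∈ ({-1, 0, 1} : Set ℝ) →
      (αstar * bstar i - w i)^2 ≤ (αstar * t - w i)^2 := by
    intro i t ht
    have hb' : ∀ j, Function.update bstar i t j ∈ ({-1, 0, 1} : Set ℝ) := by
      intro j
      by_cases hj : j = i
      · subst hj; simpa using ht
      · rw [Function.update_of_ne hj]; exact hbstar j
    have h := hmin αstar hαpos (Function.update bstar i t) hb'
    rw [← Finset.sum_erase_add _ _ (Finset.mem_univ i),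
        ← Finset.sum_erase_add _ (fun j => d j * (αstar * Function.update bstar i t j - w j)^2)
          (Finset.mem_univ i)] at h
    have heq : ∑ j ∈ Finset.univ.erase i, d j * (αstar * Function.update bstar i t j - w j)^2
        = ∑ j ∈ Finset.univ.erase i, d j * (αstar * bstar j - w j)^2 := by
      apply Finset.sum_congr rfl
      intro j hj
      rw [Function.update_of_ne (Finset.ne_of_mem_erase hj)]
    rw [heq, Function.update_self] at h
    have hdi := hd i
    nlinarith [h]
  -- first conclusion
  have part1 : ∀ i, bstar i =
      if w i > αstar / 2 then 1 else if w i < -(αstar / 2) then -1 else 0 := by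
    intro i
    have hw1 : w i ≠ αstar / 2 := by
      intro h; exact hne i (by rw [h, abs_of_pos (by linarith)])
    have hw2 : w i ≠ -(αstar / 2) := by
      intro h; exact hne i (by rw [h, abs_of_neg (by linarith)]; ring)
    have hm : bstar i = -1 ∨ bstar i = 0 ∨ bstar i = 1 := by
      simpa [Set.mem_insert_iff] using hbstar i
    have P1 := point i 1 (by simp)
    have P0 := point i 0 (by simp)
    have Pm := point i (-1) (by simp)
    split_ifs with h1 h2
    · rcases hm with h | h | h
      · rw [h] at P1; nlinarith
      · rw [h] at P1; nlinarith
      · exact h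
    · rcases hm with h | h | h
      · exact h
      · rw [h] at Pm; nlinarith
      · rw [h] at Pm; nlinarith
    · push_neg at h1 h2
      have h1' : w i < αstar / 2 := lt_of_le_of_ne h1 hw1
      have h2' : -(αstar / 2) < w i := lt_of_le_of_ne h2 (Ne.symm hw2)
      rcases hm with h | h | h
      · rw [h] at P0; nlinarith
      · exact h
      · rw [h] at P0; nlinarith
  refine ⟨part1, ?_⟩
  -- scale optimality
  set A := ∑ i, d i * (bstar i)^2 with hA
  set S := ∑ i, d i * (bstar i * w i) with hS
  have hApos : 0 < A := by
    obtain ⟨i, hi⟩ := hnz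
    have hsq : 0 < (bstar i)^2 :=
      lt_of_le_of_ne (sq_nonneg _) (Ne.symm (pow_ne_zero 2 hi))
    have : 0 < d i * (bstar i)^2 := mul_pos (hd i) hsq
    refine Finset.sum_pos' (fun j _ => mul_nonneg (hd j).le (sq_nonneg _))
      ⟨i, Finset.mem_univ i, this⟩
  have hquad : ∀ α : ℝ, 0 < α →
      A * αstar^2 - 2 * αstar * S ≤ A * α^2 - 2 * α * S := by
    intro α hα
    have h := hmin α hα bstar hbstar
    have e1 : ∀ β : ℝ, ∑ i, d i * (β * bstar i - w i)^2
        = β^2 * A - 2 * β * S + ∑ i, d i * (w i)^2 := by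
      intro β
      rw [hA, hS, Finset.mul_sum, Finset.mul_sum, ← Finset.sum_sub_distrib,
          ← Finset.sum_add_distrib]
      apply Finset.sum_congr rfl
      intro j _
      ring
    rw [e1 α, e1 αstar] at h
    nlinarith
  clear_value A S
  have hαeq : αstar = S / A := by
    have hSpos : 0 < S := by
      by_contra hc
      push_neg at hc
      have h := hquad (αstar / 2) (by linarith)
      nlinarith [mul_pos hApos (mul_pos hαpos hαpos),
        mul_nonpos_of_nonneg_of_nonpos hαpos.le hc]
    have hA' : A ≠ 0 := ne_of_gt hApos
    have h := hquad (S / A) (div_pos hSpos hApos)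
    have key : A * (S / A)^2 - 2 * (S / A) * S = -(S^2) / A := by
      field_simp; ring
    rw [key] at h
    have h2 : A * (A * αstar^2 - 2 * αstar * S) ≤ A * (-(S^2) / A) :=
      mul_le_mul_of_nonneg_left h hApos.le
    have h3 : A * (-(S^2) / A) = -(S^2) := by rw [mul_comm, div_mul_cancel₀ _ hA']
    rw [h3] at h2
    have h4 : (A * αstar - S)^2 ≤ 0 := by nlinarith
    have h5 : A * αstar - S = 0 := by nlinarith [sq_nonneg (A * αstar - S)]
    rw [eq_div_iff hA']
    linear_combination h5
  -- rewrite S and A using part1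
  have hSeq : S = ∑ i, d i * |bstar i| * |w i| := by
    rw [hS]
    apply Finset.sum_congr rfl
    intro i _
    have h := part1 i
    split_ifs at h with h1 h2
    · rw [h, abs_of_nonneg (le_of_lt (lt_trans (by linarith) h1))]; norm_num
    · rw [h, abs_of_neg (lt_trans h2 (by linarith))]; norm_num
    · rw [h]; norm_num
  have hAeq : A = ∑ i, d i * |bstar i| := by
    rw [hA]
    apply Finset.sum_congr rfl
    intro i _
    have hm : bstar i = -1 ∨ bstar i = 0 ∨ bstar i = 1 := by
      simpa [Set.mem_insert_iff] using hbstar i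
    rcases hm with h | h | h <;> rw [h] <;> norm_num
  rw [← hSeq, ← hAeq]
  exact hαeq
end

section
/- Let n be a positive integer, w, d ∈ ℝⁿ with dᵢ > 0 for all i, and let b ∈ {−1,0,1}ⁿ be sign-consistent with w (bᵢ·wᵢ ≥ 0 for all i) and not identically zero. Then the minimum over α ∈ ℝ of (1/2)·Σᵢ dᵢ(α bᵢ − wᵢ)² equals (1/2)·( Σᵢ dᵢwᵢ² − (Σᵢ dᵢ|bᵢ||wᵢ|)² / (Σᵢ dᵢ|bᵢ|) ). Equivalently, the partially minimized ternarization objective equals a constant minus (1/2)·‖b ⊙ d ⊙ w‖₁² / ‖b ⊙ d‖₁. -/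
/-- Partial minimization identity (key step in Proposition 3): for a fixed
sign-consistent, not identically zero ternary vector `b`, the minimum over `α ∈ ℝ`
of `(1/2)·∑ i, d i (α b i − w i)²` equals
`(1/2)·(∑ i, d i w i² − (∑ i, d i |b i| |w i|)² / (∑ i, d i |b i|))`. -/
theorem stmt_4 (n : ℕ) (hn : 0 < n) (w d : Fin n → ℝ) (hd : ∀ i, 0 < d i)
    (b : Fin n → ℝ) (hb : ∀ i, b i ∈ ({-1, 0, 1} : Set ℝ))
    (hsign : ∀ i, b i * w i ≥ 0) (hnz : ∃ i, b i ≠ 0) :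
    IsLeast (Set.range fun α : ℝ => (1/2) * ∑ i, d i * (α * b i - w i)^2)
      ((1/2) * ((∑ i, d i * (w i)^2)
        - (∑ i, d i * |b i| * |w i|)^2 / (∑ i, d i * |b i|))) := by
  set S := ∑ i, d i * |b i| with hS
  set A := ∑ i, d i * |b i| * |w i| with hA
  set C := ∑ i, d i * (w i)^2 with hC
  have hb2 : ∀ i, (b i)^2 = |b i| := by
    intro i
    rcases hb i with h | h | h <;> rw [h] <;> norm_num
  have hbw : ∀ i, b i * w i = |b i| * |w i| := by
    intro i
    rcases hb i with h | h | h
    · have hs := hsign i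
      rw [h] at hs ⊢
      have hw : w i ≤ 0 := by linarith
      rw [abs_of_nonpos hw]; norm_num
    · rw [h]; simp
    · have hs := hsign i
      rw [h] at hs ⊢
      have hw : 0 ≤ w i := by linarith
      rw [abs_of_nonneg hw]; norm_num
  have hSpos : 0 < S := by
    obtain ⟨i, hi⟩ := hnz
    apply Finset.sum_pos' (fun j _ => mul_nonneg (hd j).le (abs_nonneg _))
    exact ⟨i, Finset.mem_univ i,
      mul_pos (hd i) (abs_pos.mpr hi)⟩
  have sum_eq : ∀ α : ℝ, ∑ i, d i * (α * b i - w i)^2 = α^2 * S - 2*α*A + C := by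
    intro α
    rw [hS, hA, hC, Finset.mul_sum, Finset.mul_sum, ← Finset.sum_sub_distrib,
      ← Finset.sum_add_distrib]
    apply Finset.sum_congr rfl
    intro i _
    linear_combination d i * α^2 * hb2 i - 2 * d i * α * hbw i
  constructor
  · refine ⟨A/S, ?_⟩
    show (1/2 : ℝ) * ∑ i, d i * ((A/S) * b i - w i)^2 = _
    rw [sum_eq]
    field_simp
    ring
  · rintro x ⟨α, rfl⟩
    show (1/2 : ℝ) * (C - A^2/S) ≤ (1/2 : ℝ) * ∑ i, d i * (α * b i - w i)^2
    rw [sum_eq]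
    have hdiv : S * (A^2/S) = A^2 := by field_simp
    nlinarith [sq_nonneg (α*S - A), hSpos, hdiv]
end

section
/- Let n be a positive integer, w, d ∈ ℝⁿ with dᵢ > 0 for all i, and let σ be a permutation of {1,…,n} with |w_{σ(1)}| ≥ … ≥ |w_{σ(n)}|. For j ∈ {1,…,n} set A_j = Σ_{i=1}^{j} d_{σ(i)}|w_{σ(i)}|, D_j = Σ_{i=1}^{j} d_{σ(i)}, and h(j) = A_j² / D_j. Let j* ∈ {1,…,n} satisfy h(j) ≤ h(j*) for all j. Define α* = A_{j*}/D_{j*} and b* ∈ {−1,0,1}ⁿ by b*ᵢ = sign(wᵢ) if σ⁻¹(i) ≤ j* and b*ᵢ = 0 otherwise. Then (α*, b*) is a global minimizer of f(α,b) = (1/2)·Σᵢ dᵢ(α bᵢ − wᵢ)² over all α ∈ ℝ and b ∈ {−1,0,1}ⁿ, and the minimum value equals (1/2)·(Σᵢ dᵢwᵢ² − h(j*)). (Proposition 3: the exact loss-aware ternarization solver—choosing the prefix of the descending-|w| order that maximizes c_j²·cum(d)_j, with α = 2c_j where c_j = A_j/(2D_j)—produces the globally optimal scaling and ternary vector.)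 -/
/-- Proposition 3: the exact loss-aware ternarization solver. Let `σ` sort `|w|` in
non-increasing order, and for each prefix length `j` (0-indexed, prefix `{i : i ≤ j}`)
set `A j = ∑_{i ≤ j} d (σ i) |w (σ i)|`, `D j = ∑_{i ≤ j} d (σ i)` and
`h j = (A j)² / D j`. If `jstar` maximizes `h`, then `αstar = A jstar / D jstar`
together with `bstar i = sign (w i)` on the prefix (and 0 elsewhere) is a global
minimizer of `f(α,b) = (1/2)·∑ i, d i (α b i − w i)²` over all `α ∈ ℝ` and
`b ∈ {−1,0,1}ⁿ`, and the minimum value equals `(1/2)·(∑ i, d i w i² − h jstar)`. -/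
theorem stmt_6 (n : ℕ) (hn : 0 < n) (w d : Fin n → ℝ) (hd : ∀ i, 0 < d i)
    (σ : Equiv.Perm (Fin n))
    (hsort : ∀ i k : Fin n, i ≤ k → |w (σ k)| ≤ |w (σ i)|)
    (A D h : Fin n → ℝ)
    (hA : ∀ j, A j = ∑ i ∈ Finset.univ.filter (fun i => i ≤ j), d (σ i) * |w (σ i)|)
    (hD : ∀ j, D j = ∑ i ∈ Finset.univ.filter (fun i => i ≤ j), d (σ i))
    (hh : ∀ j, h j = (A j)^2 / D j)
    (jstar : Fin n) (hjstar : ∀ j, h j ≤ h jstar)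
    (αstar : ℝ) (hαstar : αstar = A jstar / D jstar)
    (bstar : Fin n → ℝ)
    (hbstar : ∀ i, bstar i = if σ.symm i ≤ jstar then Real.sign (w i) else 0) :
    (∀ α : ℝ, ∀ b : Fin n → ℝ, (∀ i, b i ∈ ({-1, 0, 1} : Set ℝ)) →
      (1/2) * ∑ i, d i * (αstar * bstar i - w i)^2
        ≤ (1/2) * ∑ i, d i * (α * b i - w i)^2) ∧
    (1/2) * ∑ i, d i * (αstar * bstar i - w i)^2
      = (1/2) * ((∑ i, d i * (w i)^2) - h jstar) := by
  have hDpos : ∀ j, 0 < D j := by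
    intro j
    rw [hD]
    apply Finset.sum_pos (fun i _ => hd _)
    exact ⟨j, by simp⟩
  have hAnn : ∀ j, 0 ≤ A j := by
    intro j; rw [hA]
    exact Finset.sum_nonneg fun i _ => mul_nonneg (hd _).le (abs_nonneg _)
  have hhnn : ∀ j, 0 ≤ h j := by
    intro j; rw [hh]; exact div_nonneg (sq_nonneg _) (hDpos j).le
  -- key lemma: for any β ≥ 0 and any subset B, the "gain" is at most h jstar
  have key : ∀ β : ℝ, 0 ≤ β → ∀ B : Finset (Fin n),
      (∑ i ∈ B, d i * (2*β*|w i| - β^2)) ≤ h jstar := by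
    intro β hβ B
    set t : Fin n → ℝ := fun i => d i * (2*β*|w i| - β^2) with ht
    have step1 : ∑ i ∈ B, t i ≤ ∑ i ∈ Finset.univ.filter (fun i => 0 ≤ t i), t i := by
      calc ∑ i ∈ B, t i
          ≤ ∑ i ∈ B.filter (fun i => 0 ≤ t i), t i := by
            have hsplit := Finset.sum_filter_add_sum_filter_not B (fun i => 0 ≤ t i) t
            have hneg : ∑ i ∈ B.filter (fun i => ¬ 0 ≤ t i), t i ≤ 0 :=
              Finset.sum_nonpos fun i hi => le_of_not_ge (Finset.mem_filter.mp hi).2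
            linarith
        _ ≤ _ := by
            apply Finset.sum_le_sum_of_subset_of_nonneg
            · intro i hi
              simp only [Finset.mem_filter, Finset.mem_univ, true_and]
              exact (Finset.mem_filter.mp hi).2
            · exact fun i hi _ => (Finset.mem_filter.mp hi).2
    -- reindex by σ
    have step2 : ∑ i ∈ Finset.univ.filter (fun i => 0 ≤ t i), t i
        = ∑ p ∈ Finset.univ.filter (fun p => 0 ≤ t (σ p)), t (σ p) := by
      apply Finset.sum_equiv σ.symm
      · intro p
        simp [Equiv.apply_symm_apply]
      · intro p _
        simp [Equiv.apply_symm_apply]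
    rw [step2] at step1
    set P : Finset (Fin n) := Finset.univ.filter (fun p => 0 ≤ t (σ p)) with hP
    rcases P.eq_empty_or_nonempty with hPe | hPne
    · rw [hPe] at step1
      simpa using step1.trans (hhnn jstar)
    · set j : Fin n := P.max' hPne with hj
      have hjP : j ∈ P := P.max'_mem hPne
      have hjpos : 0 ≤ 2*β*|w (σ j)| - β^2 := by
        have h2 := (Finset.mem_filter.mp hjP).2
        simp only [ht] at h2
        nlinarith [hd (σ j)]
      have hPeq : P = Finset.univ.filter (fun p => p ≤ j) := by
        ext p
        simp only [hP, Finset.mem_filter, Finset.mem_univ, true_and]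
        constructor
        · intro hp
          exact P.le_max' p (by simp [hP, hp])
        · intro hp
          have hmono : |w (σ j)| ≤ |w (σ p)| := hsort p j hp
          have h3 : 0 ≤ 2*β*|w (σ p)| - β^2 := by nlinarith
          simp only [ht]
          exact mul_nonneg (hd _).le h3
      rw [hPeq] at step1
      have hsum : ∑ p ∈ Finset.univ.filter (fun p => p ≤ j), t (σ p)
          = 2*β*(A j) - β^2*(D j) := by
        rw [hA, hD, Finset.mul_sum, Finset.mul_sum, ← Finset.sum_sub_distrib]
        exact Finset.sum_congr rfl fun p _ => by ring
      rw [hsum] at step1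
      have hle : 2*β*(A j) - β^2*(D j) ≤ h j := by
        rw [hh, le_div_iff₀ (hDpos j)]
        nlinarith [sq_nonneg (A j - β * D j), hDpos j]
      exact step1.trans (hle.trans (hjstar j))
  -- expansion of the objective
  have expand : ∀ (α : ℝ) (b : Fin n → ℝ),
      ∑ i, d i * (α * b i - w i)^2
        = (∑ i, d i * (w i)^2) - ∑ i, d i * (2*α*(b i)*(w i) - α^2*(b i)^2) := by
    intro α b
    rw [← Finset.sum_sub_distrib]
    exact Finset.sum_congr rfl fun i _ => by ring
  -- upper bound on the cross term for ternary b
  have upper : ∀ (α : ℝ) (b : Fin n → ℝ), (∀ i, b i ∈ ({-1, 0, 1} : Set ℝ)) →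
      ∑ i, d i * (2*α*(b i)*(w i) - α^2*(b i)^2) ≤ h jstar := by
    intro α b hb
    have hstep : ∑ i, d i * (2*α*(b i)*(w i) - α^2*(b i)^2)
        ≤ ∑ i ∈ Finset.univ.filter (fun i => b i ≠ 0), d i * (2 * |α| * |w i| - |α| ^ 2) := by
      rw [← Finset.sum_filter_add_sum_filter_not Finset.univ (fun i => b i ≠ 0)
        (fun i => d i * (2*α*(b i)*(w i) - α^2*(b i)^2))]
      have hzero : ∑ i ∈ Finset.univ.filter (fun i => ¬ b i ≠ 0),
          d i * (2*α*(b i)*(w i) - α^2*(b i)^2) = 0 := by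
        apply Finset.sum_eq_zero
        intro i hi
        have : b i = 0 := not_not.mp (Finset.mem_filter.mp hi).2
        simp [this]
      rw [hzero, add_zero]
      apply Finset.sum_le_sum
      intro i hi
      have hbi : b i ≠ 0 := (Finset.mem_filter.mp hi).2
      have habw : α * b i * w i ≤ |α| * |w i| := by
        rcases hb i with h1 | h1 | h1
        · rw [h1]
          calc α * (-1) * w i ≤ |α * (-1) * w i| := le_abs_self _
            _ = |α| * |w i| := by rw [abs_mul, abs_mul]; simp
        · exact absurd h1 hbi
        · rw [h1]
          calc α * 1 * w i ≤ |α * 1 * w i| := le_abs_self _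
            _ = |α| * |w i| := by rw [abs_mul, abs_mul]; simp
      have hsq : (b i)^2 = 1 := by
        rcases hb i with h1 | h1 | h1
        · rw [h1]; norm_num
        · exact absurd h1 hbi
        · rw [h1]; norm_num
      have : 2*α*(b i)*(w i) - α^2*(b i)^2 ≤ 2 * |α| * |w i| - |α| ^ 2 := by
        rw [hsq, sq_abs]
        nlinarith
      exact mul_le_mul_of_nonneg_left this (hd i).le
    exact hstep.trans (key |α| (abs_nonneg α) _)
  -- cross term at the proposed solution equals h jstar
  have eqstar : ∑ i, d i * (2*αstar*(bstar i)*(w i) - αstar^2*(bstar i)^2) = h jstar := by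
    have hre : ∑ i, d i * (2*αstar*(bstar i)*(w i) - αstar^2*(bstar i)^2)
        = ∑ p, d (σ p) * (2*αstar*(bstar (σ p))*(w (σ p)) - αstar^2*(bstar (σ p))^2) :=
      (Equiv.sum_comp σ (fun i => d i * (2*αstar*(bstar i)*(w i) - αstar^2*(bstar i)^2))).symm
    rw [hre]
    have hfil : ∑ p, d (σ p) * (2*αstar*(bstar (σ p))*(w (σ p)) - αstar^2*(bstar (σ p))^2)
        = ∑ p ∈ Finset.univ.filter (fun p => p ≤ jstar),
            d (σ p) * (2*αstar*(Real.sign (w (σ p)))*(w (σ p))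
              - αstar^2*(Real.sign (w (σ p)))^2) := by
      rw [Finset.sum_filter]
      apply Finset.sum_congr rfl
      intro p _
      by_cases hp : p ≤ jstar
      · rw [if_pos hp, hbstar, if_pos (by simpa using hp)]
      · rw [if_neg hp, hbstar, if_neg (by simpa using hp)]
        ring
    rw [hfil]
    by_cases hA0 : A jstar = 0
    · have hα0 : αstar = 0 := by rw [hαstar, hA0, zero_div]
      have hh0 : h jstar = 0 := by rw [hh, hA0]; simp
      rw [hα0, hh0]
      apply Finset.sum_eq_zero
      intro p _
      ring
    · -- no zeros of w in the prefix
      have hnz : ∀ p, p ≤ jstar → w (σ p) ≠ 0 := by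
        intro p hp hw0
        have hzero_after : ∀ q : Fin n, p ≤ q → w (σ q) = 0 := by
          intro q hq
          have := hsort p q hq
          rw [hw0, abs_zero] at this
          exact abs_nonpos_iff.mp this
        by_cases hp0 : p.val = 0
        · apply hA0
          rw [hA]
          apply Finset.sum_eq_zero
          intro q _
          have hwq : w (σ q) = 0 := hzero_after q (Fin.le_def.mpr (by omega))
          rw [hwq, abs_zero, mul_zero]
        · have hp1 : 1 ≤ p.val := Nat.one_le_iff_ne_zero.mpr hp0
          set p' : Fin n := ⟨p.val - 1, lt_of_le_of_lt (Nat.sub_le _ _) p.isLt⟩ with hp'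
          have hp'lt : p' < p := Fin.lt_def.mpr (by simp [hp']; omega)
          have hp'le : p' ≤ jstar := le_of_lt (lt_of_lt_of_le hp'lt hp)
          have hAe : A jstar = A p' := by
            rw [hA, hA]
            apply (Finset.sum_subset ?_ ?_).symm
            · intro q hq
              simp only [Finset.mem_filter, Finset.mem_univ, true_and] at hq ⊢
              exact le_trans hq hp'le
            · intro q hq hq'
              simp only [Finset.mem_filter, Finset.mem_univ, true_and] at hq hq'
              have hpq : p ≤ q := by
                have : p' < q := lt_of_not_ge hq'
                rw [Fin.lt_def] at this
                exact Fin.le_def.mpr (by simp [hp'] at this; omega)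
              rw [hzero_after q hpq, abs_zero, mul_zero]
          have hDlt : D p' < D jstar := by
            rw [hD, hD]
            apply Finset.sum_lt_sum_of_subset (i := p)
            · intro q hq
              simp only [Finset.mem_filter, Finset.mem_univ, true_and] at hq ⊢
              exact le_trans hq hp'le
            · simp [hp]
            · simp [not_le.mpr hp'lt]
            · exact hd _
            · exact fun q _ _ => (hd _).le
          have hApos : 0 < (A jstar)^2 := by positivity
          have : h jstar < h p' := by
            rw [hh, hh, ← hAe]
            exact div_lt_div_of_pos_left hApos (hDpos p') hDlt
          linarith [hjstar p']
      have hterm : ∀ p ∈ Finset.univ.filter (fun p => p ≤ jstar),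
          d (σ p) * (2*αstar*(Real.sign (w (σ p)))*(w (σ p))
            - αstar^2*(Real.sign (w (σ p)))^2)
          = 2*αstar*(d (σ p) * |w (σ p)|) - αstar^2 * d (σ p) := by
        intro p hp
        have hpw : w (σ p) ≠ 0 := hnz p (by simpa using (Finset.mem_filter.mp hp).2)
        have hs1 : Real.sign (w (σ p)) * (w (σ p)) = |w (σ p)| := by
          rcases lt_trichotomy (w (σ p)) 0 with hlt | heq | hgt
          · rw [Real.sign_of_neg hlt, abs_of_neg hlt]; ring
          · exact absurd heq hpw
          · rw [Real.sign_of_pos hgt, abs_of_pos hgt]; ring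
        have hs2 : (Real.sign (w (σ p)))^2 = 1 := by
          rcases lt_trichotomy (w (σ p)) 0 with hlt | heq | hgt
          · rw [Real.sign_of_neg hlt]; norm_num
          · exact absurd heq hpw
          · rw [Real.sign_of_pos hgt]; norm_num
        calc d (σ p) * (2*αstar*(Real.sign (w (σ p)))*(w (σ p))
              - αstar^2*(Real.sign (w (σ p)))^2)
            = d (σ p) * (2*αstar*((Real.sign (w (σ p)))*(w (σ p)))
              - αstar^2*(Real.sign (w (σ p)))^2) := by ring
          _ = _ := by rw [hs1, hs2]; ring
      rw [Finset.sum_congr rfl hterm, Finset.sum_sub_distrib, ← Finset.mul_sum,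
        ← Finset.mul_sum, ← hA, ← hD, hαstar, hh]
      have hD0 : D jstar ≠ 0 := (hDpos jstar).ne'
      field_simp
      ring
  constructor
  · intro α b hb
    have h1 := upper α b hb
    rw [expand, expand]
    rw [eqstar]
    linarith
  · rw [expand, eqstar]
end

section
/- Let n be a positive integer, w ∈ ℝⁿ, and λ > 0. Suppose α* > 0 and b* ∈ {−1,0,1}ⁿ jointly minimize (λ/2)·Σᵢ(α bᵢ − wᵢ)² over all α > 0 and b ∈ {−1,0,1}ⁿ, with b* not identically zero and |wᵢ| ≠ α*/2 for all i. Set Δ* = α*/2. Then: (a) α* = (Σ_{i : |wᵢ| > Δ*} |wᵢ|) / #{i : |wᵢ| > Δ*}; and (b) for every Δ > 0 such that {i : |wᵢ| > Δ} is nonempty, (Σ_{i:|wᵢ|>Δ} |wᵢ|)² / #{i : |wᵢ| > Δ} ≤ (Σ_{i:|wᵢ|>Δ*} |wᵢ|)² / #{i : |wᵢ| > Δ*}. (Corollary 1: when the approximate Hessian is a multiple of the identity, D = λI, the loss-aware ternarization optimum reduces to the TWN solution with threshold Δ = α/2: the threshold maximizes (Σ_{|wᵢ|>Δ}|wᵢ|)²/‖I_Δ(w)‖₁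 and α is the mean of the surviving |wᵢ|.) -/
/-!
Under uniform curvature the loss separates over coordinates, so for fixed `α` each `bᵢ` minimizes
`(α bᵢ - wᵢ)²` over `{-1, 0, 1}`, which forces `b = I_{α/2}(w)` (`ternarize (α / 2) w`).
For `b = I_Δ(w)`, writing `S_Δ = ∑_{|wᵢ|>Δ} |wᵢ|` (`sumAbove w Δ`) and `c_Δ = ‖I_Δ(w)‖₁`
(`cardAbove w Δ`), the loss is the quadratic
`‖w‖² - S_Δ²/c_Δ + c_Δ (α - S_Δ/c_Δ)²` in `α`. Optimality in `α` gives `α* = S*/c*`, and the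
optimal loss `‖w‖² - S*²/c*` is at most the loss `‖w‖² - S_Δ²/c_Δ` of the competitor
`(S_Δ/c_Δ, I_Δ(w))`.
-/

open Finset

section Separable

variable {ι α M : Type*} [Fintype ι] [DecidableEq ι]
  [AddCommMonoid M] [PartialOrder M] [IsOrderedCancelAddMonoid M]

theorem isMinOn_apply_of_isMinOn_sum {f : ι → α → M} {S : ι → Set α} {x : ι → α}
    (hx : x ∈ Set.univ.pi S) (hmin : IsMinOn (fun y => ∑ i, f i (y i)) (Set.univ.pi S) x)
    (i : ι) : IsMinOn (f i) (S i) (x i) := by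
  intro s hs
  have hupdate : Function.update x i s ∈ Set.univ.pi S := by
    intro j _
    rcases eq_or_ne j i with rfl | hj
    · simpa using hs
    · simpa [hj] using hx j (Set.mem_univ j)
  have key : ∑ j, f j (x j) ≤ ∑ j, f j (Function.update x i s j) := hmin hupdate
  simp only [Function.apply_update f x i s, sum_update_of_mem (mem_univ i)] at key
  rw [← add_sum_erase univ _ (mem_univ i), ← sdiff_singleton_eq_erase] at key
  exact le_of_add_le_add_right key

end Separable

theorem eq_ite_sign_of_isMinOn {α x t : ℝ} (hα : 0 < α) (hx : |x| ≠ α / 2)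
    (ht : t ∈ ({-1, 0, 1} : Set ℝ))
    (hmin : IsMinOn (fun s => (α * s - x) ^ 2) {-1, 0, 1} t) :
    t = if α / 2 < |x| then (SignType.sign x : ℝ) else 0 := by
  have hneg : (α * t - x) ^ 2 ≤ (α * -1 - x) ^ 2 := hmin (by simp)
  have hzero : (α * t - x) ^ 2 ≤ (α * 0 - x) ^ 2 := hmin (by simp)
  have hone : (α * t - x) ^ 2 ≤ (α * 1 - x) ^ 2 := hmin (by simp)
  rcases hx.lt_or_gt with hsmall | hlarge
  · rw [if_neg hsmall.not_gt]
    obtain ⟨hlo, hhi⟩ := abs_lt.mp hsmall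
    rcases ht with rfl | rfl | rfl <;> nlinarith
  · rw [if_pos hlarge]
    rcases lt_abs.mp hlarge with hxpos | hxneg
    · rw [sign_pos (by linarith), SignType.coe_one]
      rcases ht with rfl | rfl | rfl <;> nlinarith
    · rw [sign_neg (by linarith), SignType.coe_neg_one]
      rcases ht with rfl | rfl | rfl <;> nlinarith

noncomputable section Ternarization

variable {ι : Type*}

def ternarize (Δ : ℝ) (w : ι → ℝ) : ι → ℝ :=
  fun i => if Δ < |w i| then (SignType.sign (w i) : ℝ) else 0

theorem ternarize_mem (Δ : ℝ) (w : ι → ℝ) (i : ι) :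
    ternarize Δ w i ∈ ({-1, 0, 1} : Set ℝ) := by
  unfold ternarize
  split_ifs
  · rcases SignType.sign (w i) with _ | _ | _ <;> simp
  · simp

variable [Fintype ι]

def sumAbove (w : ι → ℝ) (Δ : ℝ) : ℝ :=
  ∑ i ∈ univ.filter (fun i => Δ < |w i|), |w i|

def cardAbove (w : ι → ℝ) (Δ : ℝ) : ℝ :=
  #(univ.filter (fun i => Δ < |w i|))

def twnLoss (w : ι → ℝ) (α : ℝ) (b : ι → ℝ) : ℝ :=
  ∑ i, (α * b i - w i) ^ 2

theorem eq_ternarize_of_isMinOn {α : ℝ} {w b : ι → ℝ} (hα : 0 < α) (hw : ∀ i, |w i| ≠ α / 2)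
    (hb : b ∈ Set.univ.pi fun _ => ({-1, 0, 1} : Set ℝ))
    (hmin : IsMinOn (twnLoss w α) (Set.univ.pi fun _ => ({-1, 0, 1} : Set ℝ)) b) :
    b = ternarize (α / 2) w := by
  classical
  funext i
  exact eq_ite_sign_of_isMinOn hα (hw i) (hb i (Set.mem_univ i))
    (isMinOn_apply_of_isMinOn_sum (f := fun i s => (α * s - w i) ^ 2) hb hmin i)

theorem twnLoss_ternarize (w : ι → ℝ) (α : ℝ) {Δ : ℝ} (hΔ : 0 ≤ Δ) :
    twnLoss w α (ternarize Δ w)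
      = ∑ i, w i ^ 2 - 2 * α * sumAbove w Δ + α ^ 2 * cardAbove w Δ := by
  have hterm : ∀ i, (α * ternarize Δ w i - w i) ^ 2
      = w i ^ 2 - 2 * α * (if Δ < |w i| then |w i| else 0)
        + α ^ 2 * (if Δ < |w i| then 1 else 0) := by
    intro i
    unfold ternarize
    split_ifs with h
    · have hsq : (SignType.sign (w i) : ℝ) ^ 2 = 1 := by
        have hw : w i ≠ 0 := abs_pos.mp (hΔ.trans_lt h)
        rw [← SignType.coe_pow, ← sign_pow, sign_pos (by positivity), SignType.coe_one]
      linear_combination α ^ 2 * hsq - 2 * α * sign_mul_self (w i)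
    · ring
  simp only [twnLoss, hterm, sum_add_distrib, sum_sub_distrib, ← mul_sum, sumAbove, cardAbove,
    sum_filter, natCast_card_filter]

theorem twnLoss_ternarize_eq_add_sq (w : ι → ℝ) (α : ℝ) {Δ : ℝ} (hΔ : 0 ≤ Δ)
    (hc : cardAbove w Δ ≠ 0) :
    twnLoss w α (ternarize Δ w) = ∑ i, w i ^ 2 - sumAbove w Δ ^ 2 / cardAbove w Δ
      + cardAbove w Δ * (α - sumAbove w Δ / cardAbove w Δ) ^ 2 := by
  rw [twnLoss_ternarize w α hΔ]
  field_simp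
  ring

theorem cardAbove_pos {w : ι → ℝ} {Δ : ℝ} (h : (univ.filter fun i => Δ < |w i|).Nonempty) :
    0 < cardAbove w Δ := by
  unfold cardAbove
  exact_mod_cast h.card_pos

theorem sumAbove_pos {w : ι → ℝ} {Δ : ℝ} (hΔ : 0 ≤ Δ)
    (h : (univ.filter fun i => Δ < |w i|).Nonempty) : 0 < sumAbove w Δ :=
  sum_pos (fun _ hi => hΔ.trans_lt (mem_filter.mp hi).2) h

theorem eq_div_of_twnLoss_ternarize_le {w : ι → ℝ} {α Δ : ℝ} (hΔ : 0 ≤ Δ)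
    (hc : 0 < cardAbove w Δ)
    (h : twnLoss w α (ternarize Δ w)
      ≤ twnLoss w (sumAbove w Δ / cardAbove w Δ) (ternarize Δ w)) :
    α = sumAbove w Δ / cardAbove w Δ := by
  rw [twnLoss_ternarize_eq_add_sq w _ hΔ hc.ne', twnLoss_ternarize_eq_add_sq w _ hΔ hc.ne',
    sub_self, zero_pow two_ne_zero, mul_zero, add_zero, add_le_iff_nonpos_right] at h
  have hsq : (α - sumAbove w Δ / cardAbove w Δ) ^ 2 ≤ 0 := nonpos_of_mul_nonpos_right h hc
  exact sub_eq_zero.mp (pow_eq_zero_iff two_ne_zero |>.mp (le_antisymm hsq (sq_nonneg _)))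

end Ternarization

theorem stmt_7_general (n : ℕ) (w : Fin n → ℝ) (lam : ℝ) (hlam : 0 < lam)
    (αstar : ℝ) (hαpos : 0 < αstar)
    (bstar : Fin n → ℝ) (hbstar : ∀ i, bstar i ∈ ({-1, 0, 1} : Set ℝ))
    (hmin : ∀ α : ℝ, 0 < α → ∀ b : Fin n → ℝ, (∀ i, b i ∈ ({-1, 0, 1} : Set ℝ)) →
      (lam / 2) * ∑ i, (αstar * bstar i - w i)^2
        ≤ (lam / 2) * ∑ i, (α * b i - w i)^2)
    (hnz : ∃ i, bstar i ≠ 0)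
    (hne : ∀ i, |w i| ≠ αstar / 2) :
    (αstar = (∑ i ∈ Finset.univ.filter (fun i => |w i| > αstar / 2), |w i|) /
        ((Finset.univ.filter (fun i : Fin n => |w i| > αstar / 2)).card : ℝ)) ∧
    (∀ Δ : ℝ, 0 < Δ → (Finset.univ.filter (fun i : Fin n => |w i| > Δ)).Nonempty →
      (∑ i ∈ Finset.univ.filter (fun i => |w i| > Δ), |w i|)^2 /
          ((Finset.univ.filter (fun i : Fin n => |w i| > Δ)).card : ℝ)
        ≤ (∑ i ∈ Finset.univ.filter (fun i => |w i| > αstar / 2), |w i|)^2 /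
          ((Finset.univ.filter (fun i : Fin n => |w i| > αstar / 2)).card : ℝ)) := by
  have hopt : ∀ α, 0 < α → ∀ b : Fin n → ℝ, (∀ i, b i ∈ ({-1, 0, 1} : Set ℝ)) →
      twnLoss w αstar bstar ≤ twnLoss w α b :=
    fun α hα b hb => le_of_mul_le_mul_left (hmin α hα b hb) (half_pos hlam)
  have hb : bstar = ternarize (αstar / 2) w :=
    eq_ternarize_of_isMinOn hαpos hne (fun i _ => hbstar i)
      fun b hb => hopt αstar hαpos b fun i => hb i (Set.mem_univ i)
  have hsupp : (univ.filter fun i => αstar / 2 < |w i|).Nonempty := by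
    obtain ⟨i, hi⟩ := hnz
    refine ⟨i, mem_filter.mpr ⟨mem_univ i, ?_⟩⟩
    by_contra h
    exact hi (by rw [hb, ternarize, if_neg h])
  have hc := cardAbove_pos hsupp
  have ha : αstar = sumAbove w (αstar / 2) / cardAbove w (αstar / 2) := by
    refine eq_div_of_twnLoss_ternarize_le (by positivity) hc ?_
    rw [← hb]
    exact hopt _ (div_pos (sumAbove_pos (by positivity) hsupp) hc) bstar hbstar
  refine ⟨ha, fun Δ hΔ hΔsupp => ?_⟩
  have hcΔ := cardAbove_pos hΔsupp
  have h := hopt _ (div_pos (sumAbove_pos hΔ.le hΔsupp) hcΔ) _ (ternarize_mem Δ w)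
  rw [hb, twnLoss_ternarize_eq_add_sq w _ (by positivity) hc.ne', ← ha,
    twnLoss_ternarize_eq_add_sq w _ hΔ.le hcΔ.ne'] at h
  show sumAbove w Δ ^ 2 / cardAbove w Δ ≤ sumAbove w (αstar / 2) ^ 2 / cardAbove w (αstar / 2)
  simp only [sub_self, zero_pow two_ne_zero, mul_zero, add_zero] at h
  linarith

/-- Corollary 1: when the approximate Hessian is a multiple of the identity,
`D = λ I`, the nondegenerate loss-aware ternarization optimum reduces to the TWN
solution with threshold `Δ* = α*/2`: (a) `α*` is the mean of the surviving `|w i|`,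
and (b) the threshold `Δ*` maximizes `(∑_{|w i|>Δ} |w i|)² / #{i : |w i| > Δ}`. -/
theorem stmt_7 (n : ℕ) (hn : 0 < n) (w : Fin n → ℝ) (lam : ℝ) (hlam : 0 < lam)
    (αstar : ℝ) (hαpos : 0 < αstar)
    (bstar : Fin n → ℝ) (hbstar : ∀ i, bstar i ∈ ({-1, 0, 1} : Set ℝ))
    (hmin : ∀ α : ℝ, 0 < α → ∀ b : Fin n → ℝ, (∀ i, b i ∈ ({-1, 0, 1} : Set ℝ)) →
      (lam / 2) * ∑ i, (αstar * bstar i - w i)^2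
        ≤ (lam / 2) * ∑ i, (α * b i - w i)^2)
    (hnz : ∃ i, bstar i ≠ 0)
    (hne : ∀ i, |w i| ≠ αstar / 2) :
    (αstar = (∑ i ∈ Finset.univ.filter (fun i => |w i| > αstar / 2), |w i|) /
        ((Finset.univ.filter (fun i : Fin n => |w i| > αstar / 2)).card : ℝ)) ∧
    (∀ Δ : ℝ, 0 < Δ → (Finset.univ.filter (fun i : Fin n => |w i| > Δ)).Nonempty →
      (∑ i ∈ Finset.univ.filter (fun i => |w i| > Δ), |w i|)^2 /
          ((Finset.univ.filter (fun i : Fin n => |w i| > Δ)).card : ℝ)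
        ≤ (∑ i ∈ Finset.univ.filter (fun i => |w i| > αstar / 2), |w i|)^2 /
          ((Finset.univ.filter (fun i : Fin n => |w i| > αstar / 2)).card : ℝ)) :=
  stmt_7_general n w lam hlam αstar hαpos bstar hbstar hmin hnz hne
end

section
/- Let n be a positive integer, w, d ∈ ℝⁿ with dᵢ ≥ 0 for all i, and α > 0, β > 0. Define ŵ* ∈ ℝⁿ by ŵ*ᵢ = α if wᵢ > α/2, ŵ*ᵢ = −β if wᵢ < −β/2, and ŵ*ᵢ = 0 otherwise (i.e., ŵ* = α·I⁺_{α/2}(w) + β·I⁻_{β/2}(w)). Then for every ŵ ∈ ℝⁿ with ŵᵢ ∈ {−β, 0, α} for all i, Σᵢ dᵢ(ŵ*ᵢ − wᵢ)² ≤ Σᵢ dᵢ(ŵᵢ − wᵢ)². (Proposition 4, quantization step: for fixed scaling parameters α, β, the two-threshold rule minimizes the weighted two-scaling ternarization objective.) -/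
/-- Proposition 4, quantization step: for fixed scaling parameters `α, β > 0`, the
two-threshold rule `ŵ* = α·I⁺_{α/2}(w) + β·I⁻_{β/2}(w)` minimizes the weighted
two-scaling ternarization objective over all vectors with entries in `{−β, 0, α}`. -/
theorem stmt_9 (n : ℕ) (hn : 0 < n) (w d : Fin n → ℝ) (hd : ∀ i, 0 ≤ d i)
    (α β : ℝ) (hα : 0 < α) (hβ : 0 < β) (wstar : Fin n → ℝ)
    (hwstar : ∀ i, wstar i =
      if w i > α / 2 then α else if w i < -(β / 2) then -β else 0) :
    ∀ what : Fin n → ℝ, (∀ i, what i ∈ ({-β, 0, α} : Set ℝ)) →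
      ∑ i, d i * (wstar i - w i)^2 ≤ ∑ i, d i * (what i - w i)^2 := by
  intro what hwhat
  apply Finset.sum_le_sum
  intro i _
  apply mul_le_mul_of_nonneg_left _ (hd i)
  have hs := hwstar i
  have hh := hwhat i
  simp only [Set.mem_insert_iff, Set.mem_singleton_iff] at hh
  rcases hh with h | h | h <;> rw [h] <;>
    split_ifs at hs with h1 h2 <;> rw [hs] <;> nlinarith
end

section
/- Let n be a positive integer and w, d ∈ ℝⁿ. Let w⁺ᵢ = max(wᵢ, 0) and w⁻ᵢ = min(wᵢ, 0). Let p ∈ {0,1}ⁿ satisfy (pᵢ = 1 ⟹ wᵢ > 0) and q ∈ {−1,0}ⁿ satisfy (qᵢ = −1 ⟹ wᵢ < 0). Then for all α, β ∈ ℝ: (1/2)·Σᵢ dᵢ(α pᵢ + β qᵢ − wᵢ)² = (1/2)·Σᵢ dᵢ(α pᵢ − w⁺ᵢ)² + (1/2)·Σᵢ dᵢ(β qᵢ − w⁻ᵢ)². (The separation identity (equation (14)) in the proof of Proposition 4: the two-scaling ternarization objective splits into independent problems over positive and negative parts of w.) -/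
/-! Since `w = w⁺ + w⁻`, the squared residual `(α p + β q - w)²` is the sum of the two
separated squares plus the cross term `2 (α p - w⁺) (β q - w⁻)`, which vanishes in every
coordinate: where `w > 0` we have `q = 0` and `w⁻ = 0`, elsewhere `p = 0` and `w⁺ = 0`. -/

open Finset

lemma ne_zero_imp_of_mem_pair {R : Type*} [Zero R] {x c : R} {P : Prop}
    (hx : x ∈ ({0, c} : Set R)) (h : x = c → P) : x ≠ 0 → P := by
  rcases hx with rfl | rfl
  · exact fun h0 => absurd rfl h0
  · exact fun _ => h rfl

section Ternarization

variable {R : Type*} [CommRing R] [LinearOrder R]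

lemma mul_sub_max_mul_sub_min_eq_zero {p q w : R} (α β : R)
    (hp : p ≠ 0 → 0 < w) (hq : q ≠ 0 → w < 0) :
    (α * p - max w 0) * (β * q - min w 0) = 0 := by
  by_cases hw : 0 < w
  · have hq0 : q = 0 := by_contra fun h => (hq h).not_gt hw
    simp [hq0, min_eq_right hw.le]
  · have hp0 : p = 0 := by_contra fun h => hw (hp h)
    simp [hp0, max_eq_right (not_lt.mp hw)]

lemma sq_add_sub_eq_sq_sub_max_add_sq_sub_min {p q w : R} (α β : R)
    (hp : p ≠ 0 → 0 < w) (hq : q ≠ 0 → w < 0) :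
    (α * p + β * q - w) ^ 2 = (α * p - max w 0) ^ 2 + (β * q - min w 0) ^ 2 := by
  have hsplit : α * p + β * q - w = (α * p - max w 0) + (β * q - min w 0) := by
    linear_combination (min_add_max w 0).trans (add_zero w)
  rw [hsplit, add_sq, mul_assoc, mul_sub_max_mul_sub_min_eq_zero α β hp hq]
  ring

end Ternarization

theorem stmt_10_general (n : ℕ) (w d : Fin n → ℝ)
    (wpos wneg : Fin n → ℝ)
    (hwpos : ∀ i, wpos i = max (w i) 0) (hwneg : ∀ i, wneg i = min (w i) 0)
    (p : Fin n → ℝ) (hp : ∀ i, p i ∈ ({0, 1} : Set ℝ))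
    (hpw : ∀ i, p i = 1 → 0 < w i)
    (q : Fin n → ℝ) (hq : ∀ i, q i ∈ ({-1, 0} : Set ℝ))
    (hqw : ∀ i, q i = -1 → w i < 0) :
    ∀ α β : ℝ,
      (1/2) * ∑ i, d i * (α * p i + β * q i - w i)^2
        = (1/2) * (∑ i, d i * (α * p i - wpos i)^2)
          + (1/2) * ∑ i, d i * (β * q i - wneg i)^2 := by
  intro α β
  rw [← mul_add, ← sum_add_distrib]
  congr 1
  refine sum_congr rfl fun i _ => ?_
  have hq' : q i ∈ ({0, -1} : Set ℝ) := Set.pair_comm (-1 : ℝ) 0 ▸ hq i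
  rw [← mul_add, hwpos, hwneg, sq_add_sub_eq_sq_sub_max_add_sq_sub_min α β
    (ne_zero_imp_of_mem_pair (hp i) (hpw i)) (ne_zero_imp_of_mem_pair hq' (hqw i))]

/-- Separation identity (equation (14)) in the proof of Proposition 4: with
`w⁺ i = max (w i) 0`, `w⁻ i = min (w i) 0`, an indicator `p ∈ {0,1}ⁿ` supported on
positive entries of `w` and a negated indicator `q ∈ {−1,0}ⁿ` supported on negative
entries of `w`, the two-scaling ternarization objective splits into independent
problems over the positive and negative parts of `w`. -/
theorem stmt_10 (n : ℕ) (hn : 0 < n) (w d : Fin n → ℝ)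
    (wpos wneg : Fin n → ℝ)
    (hwpos : ∀ i, wpos i = max (w i) 0) (hwneg : ∀ i, wneg i = min (w i) 0)
    (p : Fin n → ℝ) (hp : ∀ i, p i ∈ ({0, 1} : Set ℝ))
    (hpw : ∀ i, p i = 1 → 0 < w i)
    (q : Fin n → ℝ) (hq : ∀ i, q i ∈ ({-1, 0} : Set ℝ))
    (hqw : ∀ i, q i = -1 → w i < 0) :
    ∀ α β : ℝ,
      (1/2) * ∑ i, d i * (α * p i + β * q i - w i)^2
        = (1/2) * (∑ i, d i * (α * p i - wpos i)^2)
          + (1/2) * ∑ i, d i * (β * q i - wneg i)^2 :=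
  stmt_10_general n w d wpos wneg hwpos hwneg p hp hpw q hq hqw
end

section
/- Let n be a positive integer and w, d ∈ ℝⁿ with dᵢ > 0 for all i. (a) Let p ∈ {0,1}ⁿ satisfy (pᵢ = 1 ⟹ wᵢ > 0) and be not identically zero, and set α* = (Σᵢ dᵢ pᵢ |wᵢ|)/(Σᵢ dᵢ pᵢ) = ‖p ⊙ d ⊙ w‖₁/‖p ⊙ d‖₁. Then α* minimizes α ↦ Σᵢ dᵢ(α pᵢ − wᵢ)² over ℝ. (b) Let q ∈ {−1,0}ⁿ satisfy (qᵢ = −1 ⟹ wᵢ < 0) and be not identically zero, and set β* = (Σᵢ dᵢ |qᵢ| |wᵢ|)/(Σᵢ dᵢ |qᵢ|) = ‖q ⊙ d ⊙ w‖₁/‖q ⊙ d‖₁. Then β* minimizes β ↦ Σᵢ dᵢ(β qᵢ − wᵢ)² over ℝ. (Proposition 4, scaling formulas: the optimal positive and negative scaling parameters are d-weighted means of |wᵢ| over the respective supports.) -/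
/-!
For a weight vector `d` and a direction `v`, the map `α ↦ ∑ i, d i (α v i - w i)²` is a
quadratic with leading coefficient `A = ∑ i, d i v i²`; completing the square shows that
it is minimized at `B / A` with `B = ∑ i, d i v i w i`. For a ternary `v` whose nonzero
entries agree in sign with `w`, `v i² = |v i|` and `v i w i = |v i| |w i|`, so `B / A` is
the `d`-weighted mean of `|w|` over the support of `v`.
-/

open Finset

section WeightedLeastSquares

variable {ι : Type*} [Fintype ι] (d v w : ι → ℝ)

theorem weighted_sq_sum_eq_add_sq (hA : ∑ i, d i * v i ^ 2 ≠ 0) (α : ℝ) :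
    ∑ i, d i * (α * v i - w i) ^ 2 =
      ∑ i, d i * ((∑ i, d i * (v i * w i)) / (∑ i, d i * v i ^ 2) * v i - w i) ^ 2 +
        (∑ i, d i * v i ^ 2) * (α - (∑ i, d i * (v i * w i)) / (∑ i, d i * v i ^ 2)) ^ 2 := by
  set A := ∑ i, d i * v i ^ 2
  set B := ∑ i, d i * (v i * w i)
  have expand (x : ℝ) :
      ∑ i, d i * (x * v i - w i) ^ 2 = A * x ^ 2 - 2 * B * x + ∑ i, d i * w i ^ 2 := by
    simp only [A, B, sum_mul, mul_sum, ← sum_sub_distrib, ← sum_add_distrib]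
    exact sum_congr rfl fun i _ => by ring
  rw [expand, expand]
  field_simp
  ring

theorem weighted_sq_sum_le (hA : 0 < ∑ i, d i * v i ^ 2) (α : ℝ) :
    ∑ i, d i * ((∑ i, d i * (v i * w i)) / (∑ i, d i * v i ^ 2) * v i - w i) ^ 2 ≤
      ∑ i, d i * (α * v i - w i) ^ 2 := by
  rw [weighted_sq_sum_eq_add_sq d v w hA.ne' α]
  exact le_add_of_nonneg_right (mul_nonneg hA.le (sq_nonneg _))

variable {d v w}

theorem weighted_sq_sum_le_of_ternary (hd : ∀ i, 0 < d i) (hv : ∀ i, v i ^ 2 = |v i|)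
    (hvw : ∀ i, 0 ≤ v i * w i) (hnz : ∃ i, v i ≠ 0) (α : ℝ) :
    ∑ i, d i * ((∑ i, d i * |v i| * |w i|) / (∑ i, d i * |v i|) * v i - w i) ^ 2 ≤
      ∑ i, d i * (α * v i - w i) ^ 2 := by
  have hA : 0 < ∑ i, d i * v i ^ 2 := by
    obtain ⟨j, hj⟩ := hnz
    exact sum_pos' (fun i _ => mul_nonneg (hd i).le (sq_nonneg _))
      ⟨j, mem_univ j, mul_pos (hd j) (sq_pos_of_ne_zero hj)⟩
  have hB : ∀ i, d i * (v i * w i) = d i * |v i| * |w i| := fun i => by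
    rw [mul_assoc, ← abs_mul, abs_of_nonneg (hvw i)]
  simpa only [hB, hv] using weighted_sq_sum_le d v w hA α

end WeightedLeastSquares

theorem stmt_11_general (n : ℕ) (w d : Fin n → ℝ) (hd : ∀ i, 0 < d i)
    (p : Fin n → ℝ) (hp : ∀ i, p i ∈ ({0, 1} : Set ℝ))
    (hpw : ∀ i, p i = 1 → 0 < w i) (hpnz : ∃ i, p i ≠ 0)
    (q : Fin n → ℝ) (hq : ∀ i, q i ∈ ({-1, 0} : Set ℝ))
    (hqw : ∀ i, q i = -1 → w i < 0) (hqnz : ∃ i, q i ≠ 0)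
    (αstar βstar : ℝ)
    (hαstar : αstar = (∑ i, d i * p i * |w i|) / (∑ i, d i * p i))
    (hβstar : βstar = (∑ i, d i * |q i| * |w i|) / (∑ i, d i * |q i|)) :
    (∀ α : ℝ, ∑ i, d i * (αstar * p i - w i)^2 ≤ ∑ i, d i * (α * p i - w i)^2) ∧
    (∀ β : ℝ, ∑ i, d i * (βstar * q i - w i)^2 ≤ ∑ i, d i * (β * q i - w i)^2) := by
  have hp_abs : ∀ i, |p i| = p i := fun i => by
    obtain h | h : p i = 0 ∨ p i = 1 := hp i <;> simp [h]
  have hp_sq : ∀ i, p i ^ 2 = |p i| := fun i => by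
    obtain h | h : p i = 0 ∨ p i = 1 := hp i <;> simp [h]
  have hp_sign : ∀ i, 0 ≤ p i * w i := fun i => by
    obtain h | h : p i = 0 ∨ p i = 1 := hp i
    · simp [h]
    · simpa [h] using (hpw i h).le
  have hq_sq : ∀ i, q i ^ 2 = |q i| := fun i => by
    obtain h | h : q i = -1 ∨ q i = 0 := hq i <;> simp [h]
  have hq_sign : ∀ i, 0 ≤ q i * w i := fun i => by
    obtain h | h : q i = -1 ∨ q i = 0 := hq i
    · simpa [h] using (hqw i h).le
    · simp [h]
  subst hαstar hβstar
  refine ⟨fun α => ?_, weighted_sq_sum_le_of_ternary hd hq_sq hq_sign hqnz⟩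
  simpa only [hp_abs] using weighted_sq_sum_le_of_ternary hd hp_sq hp_sign hpnz α

/-- Proposition 4, scaling formulas: (a) for an indicator `p ∈ {0,1}ⁿ` supported on
positive entries of `w` and not identically zero, the `d`-weighted mean
`αstar = ‖p ⊙ d ⊙ w‖₁/‖p ⊙ d‖₁` minimizes `α ↦ ∑ i, d i (α p i − w i)²`;
(b) for a negated indicator `q ∈ {−1,0}ⁿ` supported on negative entries of `w` and
not identically zero, `βstar = ‖q ⊙ d ⊙ w‖₁/‖q ⊙ d‖₁` minimizes
`β ↦ ∑ i, d i (β q i − w i)²`. -/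
theorem stmt_11 (n : ℕ) (hn : 0 < n) (w d : Fin n → ℝ) (hd : ∀ i, 0 < d i)
    (p : Fin n → ℝ) (hp : ∀ i, p i ∈ ({0, 1} : Set ℝ))
    (hpw : ∀ i, p i = 1 → 0 < w i) (hpnz : ∃ i, p i ≠ 0)
    (q : Fin n → ℝ) (hq : ∀ i, q i ∈ ({-1, 0} : Set ℝ))
    (hqw : ∀ i, q i = -1 → w i < 0) (hqnz : ∃ i, q i ≠ 0)
    (αstar βstar : ℝ)
    (hαstar : αstar = (∑ i, d i * p i * |w i|) / (∑ i, d i * p i))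
    (hβstar : βstar = (∑ i, d i * |q i| * |w i|) / (∑ i, d i * |q i|)) :
    (∀ α : ℝ, ∑ i, d i * (αstar * p i - w i)^2 ≤ ∑ i, d i * (α * p i - w i)^2) ∧
    (∀ β : ℝ, ∑ i, d i * (βstar * q i - w i)^2 ≤ ∑ i, d i * (β * q i - w i)^2) :=
  stmt_11_general n w d hd p hp hpw hpnz q hq hqw hqnz αstar βstar hαstar hβstar
end

section
/- Let n be a positive integer and w, d ∈ ℝⁿ with dᵢ > 0 for all i. Suppose α* > 0, β* > 0 and ŵ* ∈ ℝⁿ with ŵ*ᵢ ∈ {−β*, 0, α*} for all i jointly minimize (1/2)·Σᵢ dᵢ(ŵᵢ − wᵢ)² over all α > 0, β > 0 and ŵ with ŵᵢ ∈ {−β, 0, α}. Assume the sets P = {i : ŵ*ᵢ = α*} and N = {i : ŵ*ᵢ = −β*} are nonempty and that wᵢ ≠ α*/2 and wᵢ ≠ −β*/2 for all i. Then ŵ* = α*·I⁺_{α*/2}(w) + β*·I⁻_{β*/2}(w) (i.e., ŵ*ᵢ = α* iff wᵢ > α*/2, ŵ*ᵢ = −β* iff wᵢ < −β*/2, and ŵ*ᵢ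 = 0 otherwise), and α* = (Σ_{i: wᵢ > α*/2} dᵢwᵢ)/(Σ_{i: wᵢ > α*/2} dᵢ), β* = −(Σ_{i: wᵢ < −β*/2} dᵢwᵢ)/(Σ_{i: wᵢ < −β*/2} dᵢ). (Proposition 4, joint form: a nondegenerate global optimum of two-scaling ternarization satisfies the two-threshold rule and the weighted-mean scaling formulas.) -/
/-- Quadratic minimization over positive reals: if `m > 0` minimizes
`S x² - 2 A x` over `x > 0` with `S > 0`, then `S m = A`. -/
lemma quad_min_aux (S A m : ℝ) (hS : 0 < S) (hm : 0 < m)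
    (h : ∀ x : ℝ, 0 < x → S * m ^ 2 - 2 * A * m ≤ S * x ^ 2 - 2 * A * x) :
    S * m = A := by
  by_contra hne
  set e := S * m - A with he
  have he' : e ≠ 0 := by simpa [he, sub_eq_zero] using hne
  have habs : 0 < |e| := abs_pos.mpr he'
  have he2 : 0 < e ^ 2 := by positivity
  set ε : ℝ := min (1 / S) (m / (2 * |e|)) with hε
  have hεpos : 0 < ε := lt_min (by positivity) (by positivity)
  have hε1 : ε ≤ 1 / S := min_le_left _ _
  have hε2 : ε ≤ m / (2 * |e|) := min_le_right _ _
  have hSε : S * ε ≤ 1 := by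
    have := (le_div_iff₀ hS).mp hε1
    linarith [this, mul_comm ε S]
  have habs2 : |e * ε| ≤ m / 2 := by
    rw [abs_mul, abs_of_pos hεpos]
    calc |e| * ε ≤ |e| * (m / (2 * |e|)) :=
          mul_le_mul_of_nonneg_left hε2 habs.le
      _ = m / 2 := by field_simp
  have hub : e * ε ≤ m / 2 := le_of_abs_le habs2
  clear_value e ε
  have hxpos : 0 < m + -(e * ε) := by linarith
  have hineq := h (m + -(e * ε)) hxpos
  have hcube : S * m * (e * ε) - A * (e * ε) = e * e * ε := by
    rw [he]; ring
  have hprod : S * ε * (e ^ 2 * ε) ≤ 1 * (e ^ 2 * ε) :=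
    mul_le_mul_of_nonneg_right hSε (by positivity)
  nlinarith [hineq, hcube, hprod, mul_pos he2 hεpos]

/-- Proposition 4, joint form: a nondegenerate global optimum `(αstar, βstar, wstar)`
of the two-scaling ternarization objective `(1/2)·∑ i, d i (ŵ i − w i)²` over
`α > 0`, `β > 0` and `ŵ` with entries in `{−β, 0, α}` satisfies the two-threshold
rule `wstar = αstar·I⁺_{αstar/2}(w) + βstar·I⁻_{βstar/2}(w)` and the weighted-mean
scaling formulas. -/
theorem stmt_12 (n : ℕ) (hn : 0 < n) (w d : Fin n → ℝ) (hd : ∀ i, 0 < d i)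
    (αstar βstar : ℝ) (hαpos : 0 < αstar) (hβpos : 0 < βstar)
    (wstar : Fin n → ℝ) (hwstar : ∀ i, wstar i ∈ ({-βstar, 0, αstar} : Set ℝ))
    (hmin : ∀ α : ℝ, 0 < α → ∀ β : ℝ, 0 < β → ∀ what : Fin n → ℝ,
      (∀ i, what i ∈ ({-β, 0, α} : Set ℝ)) →
        (1/2) * ∑ i, d i * (wstar i - w i)^2
          ≤ (1/2) * ∑ i, d i * (what i - w i)^2)
    (hP : ∃ i, wstar i = αstar) (hN : ∃ i, wstar i = -βstar)
    (hneα : ∀ i, w i ≠ αstar / 2) (hneβ : ∀ i, w i ≠ -(βstar / 2)) :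
    (∀ i, wstar i =
      if w i > αstar / 2 then αstar
      else if w i < -(βstar / 2) then -βstar else 0) ∧
    αstar = (∑ i ∈ Finset.univ.filter (fun i => w i > αstar / 2), d i * w i) /
        (∑ i ∈ Finset.univ.filter (fun i : Fin n => w i > αstar / 2), d i) ∧
    βstar = -((∑ i ∈ Finset.univ.filter (fun i => w i < -(βstar / 2)), d i * w i) /
        (∑ i ∈ Finset.univ.filter (fun i : Fin n => w i < -(βstar / 2)), d i)) := by
  -- pointwise optimality
  have hpt : ∀ i, ∀ c ∈ ({-βstar, 0, αstar} : Set ℝ),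
      (wstar i - w i)^2 ≤ (c - w i)^2 := by
    intro i c hc
    have hmem : ∀ j, Function.update wstar i c j ∈ ({-βstar, 0, αstar} : Set ℝ) := by
      intro j
      rcases eq_or_ne j i with rfl | h
      · simpa using hc
      · simpa [Function.update_of_ne h] using hwstar j
    have hm := hmin αstar hαpos βstar hβpos (Function.update wstar i c) hmem
    have hsum : ∑ j, d j * (Function.update wstar i c j - w j)^2
        = d i * (c - w i)^2 + ∑ j ∈ Finset.univ.erase i, d j * (wstar j - w j)^2 := by
      rw [← Finset.add_sum_erase _ _ (Finset.mem_univ i)]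
      rw [Function.update_self]
      congr 1
      refine Finset.sum_congr rfl fun j hj => ?_
      rw [Function.update_of_ne (Finset.ne_of_mem_erase hj)]
    have hsum2 : ∑ j, d j * (wstar j - w j)^2
        = d i * (wstar i - w i)^2 + ∑ j ∈ Finset.univ.erase i, d j * (wstar j - w j)^2 :=
      (Finset.add_sum_erase _ _ (Finset.mem_univ i)).symm
    rw [hsum, hsum2] at hm
    have hdi := hd i
    nlinarith [hm]
  -- part 1: threshold rule
  have part1 : ∀ i, wstar i =
      if w i > αstar / 2 then αstar
      else if w i < -(βstar / 2) then -βstar else 0 := by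
    intro i
    have hα := hpt i αstar (by simp)
    have h0 := hpt i 0 (by simp)
    have hβ := hpt i (-βstar) (by simp)
    have hwi := hwstar i
    simp only [Set.mem_insert_iff, Set.mem_singleton_iff] at hwi
    have hne1 := hneα i
    have hne2 := hneβ i
    by_cases h1 : w i > αstar / 2
    · rw [if_pos h1]
      rcases hwi with h | h | h
      · exfalso; rw [h] at hα; nlinarith
      · exfalso; rw [h] at hα; nlinarith
      · exact h
    · rw [if_neg h1]
      have h1' : w i < αstar / 2 := lt_of_le_of_ne (not_lt.mp h1) hne1
      by_cases h2 : w i < -(βstar / 2)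
      · rw [if_pos h2]
        rcases hwi with h | h | h
        · exact h
        · exfalso; rw [h] at hβ; nlinarith
        · exfalso; rw [h] at hβ; nlinarith
      · rw [if_neg h2]
        have h2' : -(βstar / 2) < w i := lt_of_le_of_ne (not_lt.mp h2) (Ne.symm hne2)
        rcases hwi with h | h | h
        · exfalso; rw [h] at h0; nlinarith
        · exact h
        · exfalso; rw [h] at h0; nlinarith
  refine ⟨part1, ?_, ?_⟩
  · -- α formula
    have hiff : ∀ i, wstar i = αstar ↔ w i > αstar / 2 := by
      intro i
      constructor
      · intro h
        by_contra hgt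
        have hh := part1 i
        rw [if_neg hgt] at hh
        rw [h] at hh
        split_ifs at hh <;> linarith
      · intro h
        rw [part1 i, if_pos h]
    set P := Finset.univ.filter (fun i : Fin n => w i > αstar / 2) with hPdef
    have hPne : P.Nonempty := by
      obtain ⟨i, hi⟩ := hP
      exact ⟨i, by simp [hPdef, (hiff i).mp hi]⟩
    have hS : 0 < ∑ i ∈ P, d i := Finset.sum_pos (fun i _ => hd i) hPne
    set S := ∑ i ∈ P, d i with hSdef
    set A := ∑ i ∈ P, d i * w i with hAdef
    have key : ∀ α : ℝ, 0 < α →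
        S * αstar ^ 2 - 2 * A * αstar ≤ S * α ^ 2 - 2 * A * α := by
      intro α hα
      have hmem : ∀ j, (if wstar j = αstar then α else wstar j) ∈
          ({-βstar, 0, α} : Set ℝ) := by
        intro j
        by_cases h : wstar j = αstar
        · simp [h]
        · rw [if_neg h]
          have := hwstar j
          simp only [Set.mem_insert_iff, Set.mem_singleton_iff] at this ⊢
          rcases this with h' | h' | h'
          · exact Or.inl h'
          · exact Or.inr (Or.inl h')
          · exact absurd h' h
      have hm := hmin α hα βstar hβpos _ hmem
      have hPfilter : P = Finset.univ.filter (fun i : Fin n => wstar i = αstar) := by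
        apply Finset.filter_congr
        intro i _
        simp [hiff i]
      have hsplit : ∀ (v : Fin n → ℝ),
          ∑ j, d j * (v j - w j)^2 =
            ∑ j ∈ P, d j * (v j - w j)^2 +
            ∑ j ∈ Finset.univ.filter (fun j => ¬ wstar j = αstar), d j * (v j - w j)^2 := by
        intro v
        rw [hPfilter]
        exact (Finset.sum_filter_add_sum_filter_not _ _ _).symm
      rw [hsplit wstar, hsplit _] at hm
      have e1 : ∑ j ∈ Finset.univ.filter (fun j => ¬ wstar j = αstar),
          d j * ((if wstar j = αstar then α else wstar j) - w j)^2
          = ∑ j ∈ Finset.univ.filter (fun j => ¬ wstar j = αstar),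
            d j * (wstar j - w j)^2 := by
        refine Finset.sum_congr rfl fun j hj => ?_
        simp only [Finset.mem_filter] at hj
        rw [if_neg hj.2]
      have e2 : ∑ j ∈ P, d j * ((if wstar j = αstar then α else wstar j) - w j)^2
          = ∑ j ∈ P, d j * (α - w j)^2 := by
        refine Finset.sum_congr rfl fun j hj => ?_
        rw [hPfilter] at hj
        simp only [Finset.mem_filter] at hj
        rw [if_pos hj.2]
      have e3 : ∑ j ∈ P, d j * (wstar j - w j)^2 = ∑ j ∈ P, d j * (αstar - w j)^2 := by
        refine Finset.sum_congr rfl fun j hj => ?_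
        rw [hPfilter] at hj
        simp only [Finset.mem_filter] at hj
        rw [hj.2]
      rw [e1, e2, e3] at hm
      have hm' : ∑ j ∈ P, d j * (αstar - w j)^2 ≤ ∑ j ∈ P, d j * (α - w j)^2 := by
        linarith
      have expand : ∀ x : ℝ, ∑ j ∈ P, d j * (x - w j)^2
          = S * x^2 - A * (2 * x) + ∑ j ∈ P, d j * (w j)^2 := by
        intro x
        rw [hSdef, hAdef, Finset.sum_mul, Finset.sum_mul, ← Finset.sum_sub_distrib,
          ← Finset.sum_add_distrib]
        exact Finset.sum_congr rfl fun j _ => by ring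
      rw [expand, expand] at hm'
      nlinarith [hm']
    have hkey := quad_min_aux S A αstar hS hαpos key
    rw [eq_div_iff hS.ne']
    linarith [hkey]
  · -- β formula
    have hiff : ∀ i, wstar i = -βstar ↔ w i < -(βstar / 2) := by
      intro i
      constructor
      · intro h
        by_contra hgt
        have hh := part1 i
        rw [h] at hh
        split_ifs at hh <;> linarith
      · intro h
        have hgt : ¬ w i > αstar / 2 := by
          push_neg
          linarith
        rw [part1 i, if_neg hgt, if_pos h]
    set P := Finset.univ.filter (fun i : Fin n => w i < -(βstar / 2)) with hPdef
    have hPne : P.Nonempty := by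
      obtain ⟨i, hi⟩ := hN
      exact ⟨i, by simp [hPdef, (hiff i).mp hi]⟩
    have hS : 0 < ∑ i ∈ P, d i := Finset.sum_pos (fun i _ => hd i) hPne
    set S := ∑ i ∈ P, d i with hSdef
    set A := ∑ i ∈ P, d i * w i with hAdef
    have key : ∀ β : ℝ, 0 < β →
        S * βstar ^ 2 - 2 * (-A) * βstar ≤ S * β ^ 2 - 2 * (-A) * β := by
      intro β hβ
      have hmem : ∀ j, (if wstar j = -βstar then -β else wstar j) ∈
          ({-β, 0, αstar} : Set ℝ) := by
        intro j
        by_cases h : wstar j = -βstar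
        · simp [h]
        · rw [if_neg h]
          have := hwstar j
          simp only [Set.mem_insert_iff, Set.mem_singleton_iff] at this ⊢
          rcases this with h' | h' | h'
          · exact absurd h' h
          · exact Or.inr (Or.inl h')
          · exact Or.inr (Or.inr h')
      have hm := hmin αstar hαpos β hβ _ hmem
      have hPfilter : P = Finset.univ.filter (fun i : Fin n => wstar i = -βstar) := by
        apply Finset.filter_congr
        intro i _
        simp [hiff i]
      have hsplit : ∀ (v : Fin n → ℝ),
          ∑ j, d j * (v j - w j)^2 =
            ∑ j ∈ P, d j * (v j - w j)^2 +
            ∑ j ∈ Finset.univ.filter (fun j => ¬ wstar j = -βstar), d j * (v j - w j)^2 := by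
        intro v
        rw [hPfilter]
        exact (Finset.sum_filter_add_sum_filter_not _ _ _).symm
      rw [hsplit wstar, hsplit _] at hm
      have e1 : ∑ j ∈ Finset.univ.filter (fun j => ¬ wstar j = -βstar),
          d j * ((if wstar j = -βstar then -β else wstar j) - w j)^2
          = ∑ j ∈ Finset.univ.filter (fun j => ¬ wstar j = -βstar),
            d j * (wstar j - w j)^2 := by
        refine Finset.sum_congr rfl fun j hj => ?_
        simp only [Finset.mem_filter] at hj
        rw [if_neg hj.2]
      have e2 : ∑ j ∈ P, d j * ((if wstar j = -βstar then -β else wstar j) - w j)^2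
          = ∑ j ∈ P, d j * (-β - w j)^2 := by
        refine Finset.sum_congr rfl fun j hj => ?_
        rw [hPfilter] at hj
        simp only [Finset.mem_filter] at hj
        rw [if_pos hj.2]
      have e3 : ∑ j ∈ P, d j * (wstar j - w j)^2 = ∑ j ∈ P, d j * (-βstar - w j)^2 := by
        refine Finset.sum_congr rfl fun j hj => ?_
        rw [hPfilter] at hj
        simp only [Finset.mem_filter] at hj
        rw [hj.2]
      rw [e1, e2, e3] at hm
      have hm' : ∑ j ∈ P, d j * (-βstar - w j)^2 ≤ ∑ j ∈ P, d j * (-β - w j)^2 := by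
        linarith
      have expand : ∀ x : ℝ, ∑ j ∈ P, d j * (-x - w j)^2
          = S * x^2 + A * (2 * x) + ∑ j ∈ P, d j * (w j)^2 := by
        intro x
        rw [hSdef, hAdef, Finset.sum_mul, Finset.sum_mul, ← Finset.sum_add_distrib,
          ← Finset.sum_add_distrib]
        exact Finset.sum_congr rfl fun j _ => by ring
      rw [expand, expand] at hm'
      nlinarith [hm']
    have hkey := quad_min_aux S (-A) βstar hS hβpos key
    have hrw : -(A / S) = (-A) / S := by ring
    rw [hrw, eq_div_iff hS.ne']
    linarith [hkey]
end

section
/- Let Q be a finite nonempty subset of ℝ, n a positive integer, and w, d ∈ ℝⁿ with dᵢ > 0 for all i. Suppose α* > 0 and b* ∈ Qⁿ jointly minimize Σᵢ dᵢ(α bᵢ − wᵢ)² over all α > 0 and b ∈ Qⁿ, and Σᵢ dᵢ (b*ᵢ)² > 0. Then: (a) α* = (Σᵢ dᵢ b*ᵢ wᵢ) / (Σᵢ dᵢ (b*ᵢ)²); and (b) for every i and every z ∈ Q, |α* b*ᵢ − wᵢ| ≤ |α* z − wᵢ| (each b*ᵢ is a nearest point of Q to wᵢ/α*). (Proposition 5,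 joint form: a global optimum of loss-aware m-bit quantization satisfies both alternating optimality conditions.) -/
/-- Proposition 5, joint form: a global optimum `(αstar, bstar)` of loss-aware m-bit
quantization `∑ i, d i (α b i − w i)²` over `α > 0` and `b ∈ Qⁿ` (with
`∑ i, d i (bstar i)² > 0`) satisfies both alternating optimality conditions:
(a) `αstar = (∑ i, d i bstar i w i) / (∑ i, d i (bstar i)²)`, and
(b) each `bstar i` is a nearest point of `Q` to `w i / αstar`. -/
theorem stmt_15 (Q : Finset ℝ) (hQ : Q.Nonempty) (n : ℕ) (hn : 0 < n)
    (w d : Fin n → ℝ) (hd : ∀ i, 0 < d i)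
    (αstar : ℝ) (hαpos : 0 < αstar)
    (bstar : Fin n → ℝ) (hbstarQ : ∀ i, bstar i ∈ Q)
    (hmin : ∀ α : ℝ, 0 < α → ∀ b : Fin n → ℝ, (∀ i, b i ∈ Q) →
      ∑ i, d i * (αstar * bstar i - w i)^2 ≤ ∑ i, d i * (α * b i - w i)^2)
    (hbnz : 0 < ∑ i, d i * (bstar i)^2) :
    αstar = (∑ i, d i * bstar i * w i) / (∑ i, d i * (bstar i)^2) ∧
    ∀ i, ∀ z ∈ Q, |αstar * bstar i - w i| ≤ |αstar * z - w i| := by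
  set A : ℝ := ∑ i, d i * (bstar i)^2 with hA
  set B : ℝ := ∑ i, d i * bstar i * w i with hB
  have expand : ∀ α : ℝ, ∑ i, d i * (α * bstar i - w i)^2
      = α^2 * A - 2*α*B + ∑ i, d i * (w i)^2 := by
    intro α
    rw [hA, hB, Finset.mul_sum, Finset.mul_sum, ← Finset.sum_sub_distrib,
      ← Finset.sum_add_distrib]
    exact Finset.sum_congr rfl fun i _ => by ring
  have hq : ∀ α : ℝ, 0 < α → αstar^2 * A - 2*αstar*B ≤ α^2 * A - 2*α*B := by
    intro α hα
    have := hmin α hα bstar hbstarQ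
    rw [expand, expand] at this
    linarith
  have hAB : A * αstar = B := by
    rcases le_or_gt B 0 with hBle | hBpos
    · exfalso
      have h2 := hq (αstar/2) (by positivity)
      nlinarith [mul_pos (mul_pos hαpos hαpos) hbnz,
        mul_nonpos_of_nonneg_of_nonpos (le_of_lt hαpos) hBle]
    · have hμ : 0 < B / A := div_pos hBpos hbnz
      have h2 := hq (B / A) hμ
      have hAne : A ≠ 0 := ne_of_gt hbnz
      have h3 : (B/A)^2 * A - 2*(B/A)*B = -(B^2/A) := by field_simp; ring
      rw [h3] at h2
      have h4 : (A * αstar - B)^2 ≤ 0 := by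
        have := mul_le_mul_of_nonneg_left h2 (le_of_lt hbnz)
        have h5 : A * (-(B^2/A)) = -B^2 := by field_simp
        nlinarith
      nlinarith [sq_nonneg (A * αstar - B)]
  constructor
  · field_simp
    linarith [hAB]
  · intro i z hz
    set b' : Fin n → ℝ := Function.update bstar i z with hb'
    have hb'Q : ∀ j, b' j ∈ Q := by
      intro j
      by_cases hji : j = i
      · rw [hb', hji, Function.update_self]; exact hz
      · rw [hb', Function.update_of_ne hji]; exact hbstarQ j
    have key := hmin αstar hαpos b' hb'Q
    have hdiff : (0:ℝ) ≤ ∑ j, (d j * (αstar * b' j - w j)^2 - d j * (αstar * bstar j - w j)^2) := by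
      rw [Finset.sum_sub_distrib]
      linarith
    have heq : ∑ j, (d j * (αstar * b' j - w j)^2 - d j * (αstar * bstar j - w j)^2)
        = d i * (αstar * z - w i)^2 - d i * (αstar * bstar i - w i)^2 := by
      rw [Finset.sum_eq_single_of_mem i (Finset.mem_univ i)]
      · rw [hb', Function.update_self]
      · intro j _ hj
        rw [hb', Function.update_of_ne hj]
        ring
    rw [heq] at hdiff
    have hsq : (αstar * bstar i - w i)^2 ≤ (αstar * z - w i)^2 := by
      have := hd i
      nlinarith
    nlinarith [abs_nonneg (αstar * bstar i - w i), abs_nonneg (αstar * z - w i),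
      sq_abs (αstar * bstar i - w i), sq_abs (αstar * z - w i)]
end
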